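/- Suppose X is a complete nonsingular toric variety such that every primitive relation has right-hand side 0 or a single ray generator. Let {D₁,…,D_j} and {D̂₁,…,D̂_k} be distinct primitive sets with primitive relations ρ₁+⋯+ρ_j = ρ' and ρ̂₁+⋯+ρ̂_k = ρ̂'. If ρ' = ρ̂', then the two primitive sets are disjoint: {ρ₁,…,ρ_j} ∩ {ρ̂₁,…,ρ̂_k} = ∅. -/

import Mathlib

/-- A complete nonsingular (simplicial) fan in ℤⁿ, described combinatorially:
cones are recorded by their (finite) sets of primitive ray generators. -/
structure CompleteNonsingFan (n : ℕ) where
  rays : Finset (Fin n → ℤ)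
  cones : Finset (Finset (Fin n → ℤ))
  empty_mem : ∅ ∈ cones
  singleton_mem : ∀ ρ ∈ rays, {ρ} ∈ cones
  cone_rays : ∀ σ ∈ cones, σ ⊆ rays
  face_mem : ∀ σ ∈ cones, ∀ τ ⊆ σ, τ ∈ cones
  /-- nonsingularity: the generators of every cone form part of a ℤ-basis of ℤⁿ -/
  nonsingular : ∀ σ ∈ cones, ∃ b : Module.Basis (Fin n) ℤ (Fin n → ℤ),
      (σ : Set (Fin n → ℤ)) ⊆ Set.range ⇑b
  /-- completeness: every point of ℝⁿ lies in some cone -/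
  complete : ∀ x : Fin n → ℝ, ∃ σ ∈ cones, ∃ c : (Fin n → ℤ) → ℝ,
      (∀ v, 0 ≤ c v) ∧ x = ∑ v ∈ σ, c v • (fun i => (v i : ℝ))

/-- A primitive set: a set of rays not spanning a cone, every proper subset of
which spans a cone. -/
def IsPrimitiveSet {n : ℕ} (F : CompleteNonsingFan n) (P : Finset (Fin n → ℤ)) : Prop :=
  P ⊆ F.rays ∧ P ∉ F.cones ∧ ∀ ρ ∈ P, P.erase ρ ∈ F.cones

/-! Removing the common ray `ρ` from both primitive sets leaves two cones with equal generator
sums, so it suffices that a lattice point is a nonnegative integer combination of the rays of a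
cone in at most one way. `CompleteNonsingFan` has no axiom making distinct cones meet in faces,
so this uniqueness has to come from the primitive relations.

Take two such combinations with disjoint supports, `s` on a cone where a linear form `ℓ` equals
`1` and `t` on another cone. The union of the supports is not a cone, so it contains a primitive
set `R₁ ∪ R₂` with `R₁` from `s` and `R₂` from `t`; its relation trades `R₂` in `t` for nothing or
for a single ray `u`. Then `u` is cancelled against `s`, or kept if it spans a cone together with
the rest of `t`, or else lies in a primitive set `{u} ∪ W` with `W` from `t`, which is traded for
its sum and the step repeated. As `t` loses rays at each trade, this ends in a new relation between
two cones with smaller potential `M * |t| - |s|`, where `M` bounds `ℓ` on the rays; the potential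
is nonnegative because `|s| = ℓ (∑ s) = ℓ (∑ t) ≤ M * |t|`. -/

theorem Module.Basis.coord_multiset_sum {ι R M : Type*} [CommRing R] [Nontrivial R] [AddCommGroup M]
    [Module R M] [DecidableEq M] (b : Module.Basis ι R M) (i : ι) {s : Multiset M}
    (hs : ∀ x ∈ s, x ∈ Set.range b) : b.coord i s.sum = s.count (b i) := by
  classical
  induction s using Multiset.induction_on with
  | empty => simp
  | cons x s ih =>
    obtain ⟨j, rfl⟩ := hs x (Multiset.mem_cons_self x s)
    rw [Multiset.sum_cons, map_add, ih fun y hy => hs y (Multiset.mem_cons_of_mem hy),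
      Multiset.count_cons, b.coord_apply, b.repr_self, Finsupp.single_apply]
    simp only [b.injective.eq_iff, eq_comm (a := i)]
    split_ifs <;> simp [add_comm]

namespace CompleteNonsingFan

variable {n : ℕ} (F : CompleteNonsingFan n)

theorem eq_of_sum_eq_of_add_mem_cones {s t : Multiset (Fin n → ℤ)}
    (hst : (s + t).toFinset ∈ F.cones) (hsum : s.sum = t.sum) : s = t := by
  obtain ⟨b, hb⟩ := F.nonsingular _ hst
  have hrange : ∀ u : Multiset (Fin n → ℤ), u ≤ s + t → ∀ x ∈ u, x ∈ Set.range b :=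
    fun u hu x hx => hb (Multiset.mem_toFinset.mpr (Multiset.subset_of_le hu hx))
  ext v
  by_cases hv : v ∈ (s + t).toFinset
  · obtain ⟨i, rfl⟩ := hb hv
    have := congrArg (b.coord i) hsum
    rwa [b.coord_multiset_sum i (hrange s (Multiset.le_add_right s t)),
      b.coord_multiset_sum i (hrange t (Multiset.le_add_left t s)), Nat.cast_inj] at this
  · simp only [Multiset.mem_toFinset, Multiset.mem_add, not_or] at hv
    rw [Multiset.count_eq_zero_of_notMem hv.1, Multiset.count_eq_zero_of_notMem hv.2]

theorem eq_zero_of_sum_eq_zero {t : Multiset (Fin n → ℤ)} (ht : t.toFinset ∈ F.cones)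
    (hsum : t.sum = 0) : t = 0 :=
  (F.eq_of_sum_eq_of_add_mem_cones (by rwa [zero_add]) (by rw [hsum, Multiset.sum_zero])).symm

theorem exists_isPrimitiveSet_subset {T : Finset (Fin n → ℤ)} (hT : T ⊆ F.rays)
    (hT' : T ∉ F.cones) : ∃ R ⊆ T, IsPrimitiveSet F R := by
  obtain ⟨R, hR⟩ := Finset.exists_minimal (s := T.powerset.filter (· ∉ F.cones)) ⟨T, by simpa⟩
  have hRT : R ⊆ T := (Finset.mem_powerset.mp (Finset.mem_filter.mp hR.prop).1)
  refine ⟨R, hRT, hRT.trans hT, (Finset.mem_filter.mp hR.prop).2, fun ρ hρ => ?_⟩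
  by_contra h
  have hmem : R.erase ρ ∈ T.powerset.filter (· ∉ F.cones) :=
    Finset.mem_filter.mpr ⟨Finset.mem_powerset.mpr ((R.erase_subset ρ).trans hRT), h⟩
  exact (Finset.erase_ssubset hρ).not_ge (hR.le_of_le hmem (R.erase_subset ρ))

def PrimitiveSumsZeroOrRay : Prop :=
  ∀ P, IsPrimitiveSet F P → ∑ v ∈ P, v = 0 ∨ ∑ v ∈ P, v ∈ F.rays

structure ConeRelation (ℓ : (Fin n → ℤ) →ₗ[ℤ] ℤ) (s t : Multiset (Fin n → ℤ)) : Prop where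
  left_mem_cones : s.toFinset ∈ F.cones
  eval_left : ∀ v ∈ s, ℓ v = 1
  right_mem_cones : t.toFinset ∈ F.cones
  disjoint : Disjoint s t
  sum_eq : s.sum = t.sum

namespace ConeRelation

variable {F} {ℓ : (Fin n → ℤ) →ₗ[ℤ] ℤ} {M : ℕ} {s t : Multiset (Fin n → ℤ)}

theorem card_left_le (h : F.ConeRelation ℓ s t) (hM : ∀ r ∈ F.rays, ℓ r ≤ M) :
    s.card ≤ M * t.card := by
  have hs : ℓ s.sum = s.card := by
    rw [map_multiset_sum, Multiset.map_congr rfl h.eval_left, Multiset.map_const',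
      Multiset.sum_replicate, nsmul_one]
  have ht : ℓ t.sum ≤ t.card • (M : ℤ) := by
    rw [map_multiset_sum, ← Multiset.card_map ℓ]
    refine Multiset.sum_le_card_nsmul _ _ ?_
    simp only [Multiset.mem_map]
    rintro _ ⟨v, hv, rfl⟩
    exact hM v (F.cone_rays _ h.right_mem_cones (Multiset.mem_toFinset.mpr hv))
  rw [← h.sum_eq, hs, nsmul_eq_mul, mul_comm] at ht
  exact_mod_cast ht

theorem one_le_of_left_ne_zero (h : F.ConeRelation ℓ s t) (hM : ∀ r ∈ F.rays, ℓ r ≤ M) (hs : s ≠ 0) : 1 ≤ M := by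
  obtain ⟨v, hv⟩ := Multiset.exists_mem_of_ne_zero hs
  have := hM v (F.cone_rays _ h.left_mem_cones (Multiset.mem_toFinset.mpr hv))
  rw [h.eval_left v hv] at this
  exact_mod_cast this

theorem of_subset (h : F.ConeRelation ℓ s t) {S β : Multiset (Fin n → ℤ)} (hS : S ⊆ s)
    (hβ : β ⊆ t) (hsum : S.sum = β.sum) : F.ConeRelation ℓ S β where
  left_mem_cones := F.face_mem _ h.left_mem_cones _ (Multiset.toFinset_subset.mpr hS)
  eval_left v hv := h.eval_left v (hS hv)
  right_mem_cones := F.face_mem _ h.right_mem_cones _ (Multiset.toFinset_subset.mpr hβ)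
  disjoint := Multiset.disjoint_left.mpr fun hv hv' =>
    Multiset.disjoint_left.mp h.disjoint (hS hv) (hβ hv')
  sum_eq := hsum

theorem of_subset_cons (h : F.ConeRelation ℓ s t) {S β : Multiset (Fin n → ℤ)} {u : Fin n → ℤ}
    (hS : S ⊆ s) (hβ : β ⊆ t) (huS : u ∉ S) (hcone : (u ::ₘ β).toFinset ∈ F.cones)
    (hsum : S.sum = β.sum + u) : F.ConeRelation ℓ S (u ::ₘ β) where
  left_mem_cones := F.face_mem _ h.left_mem_cones _ (Multiset.toFinset_subset.mpr hS)
  eval_left v hv := h.eval_left v (hS hv)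
  right_mem_cones := hcone
  disjoint := Multiset.disjoint_left.mpr fun {v} hv hv' => by
    rcases Multiset.mem_cons.mp hv' with rfl | hvβ
    · exact huS hv
    · exact Multiset.disjoint_left.mp h.disjoint (hS hv) (hβ hvβ)
  sum_eq := by rw [Multiset.sum_cons, hsum, add_comm]

theorem false_of_sum_eq (h : F.ConeRelation ℓ s t) (hM : ∀ r ∈ F.rays, ℓ r ≤ M)
    (ih : ∀ s' t', F.ConeRelation ℓ s' t' → M * t'.card - s'.card < M * t.card - s.card → s' = 0)
    (hs : s ≠ 0) {S β : Multiset (Fin n → ℤ)} (hS : S ⊆ s) (hβ : β ≤ t)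
    (hcard : s.card ≤ S.card) (hβcard : β.card < t.card) (hsum : S.sum = β.sum) : False := by
  have h' := h.of_subset hS (Multiset.subset_of_le hβ) hsum
  have hM1 := h.one_le_of_left_ne_zero hM hs
  have hs0 : 0 < s.card := Multiset.card_pos.mpr hs
  have hS0 : S ≠ 0 := Multiset.card_pos.mp (by omega)
  refine hS0 (ih S β h' ?_)
  have h1 := h.card_left_le hM
  have h2 := h'.card_left_le hM
  have h3 : M * (β.card + 1) ≤ M * t.card := Nat.mul_le_mul_left M hβcard
  rw [mul_add_one] at h3
  omega

theorem exists_primitive_insert (hprim : F.PrimitiveSumsZeroOrRay) (h : F.ConeRelation ℓ s t)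
    {β : Multiset (Fin n → ℤ)} {u : Fin n → ℤ} (hβ : β ≤ t) (hu : u ∈ F.rays)
    (hcone : (u ::ₘ β).toFinset ∉ F.cones) :
    ∃ W : Finset (Fin n → ℤ), W.Nonempty ∧ W.val ≤ β ∧
      (u + ∑ v ∈ W, v = 0 ∨ u + ∑ v ∈ W, v ∈ F.rays) := by
  have hrays : (u ::ₘ β).toFinset ⊆ F.rays := by
    rw [Multiset.toFinset_cons]
    exact Finset.insert_subset hu ((Multiset.toFinset_subset.mpr (Multiset.subset_of_le hβ)).trans
      (F.cone_rays _ h.right_mem_cones))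
  obtain ⟨R, hRsub, hR⟩ := F.exists_isPrimitiveSet_subset hrays hcone
  have hRβ : ∀ v ∈ R, v ≠ u → v ∈ β := fun v hv hvu => by
    simpa [hvu] using hRsub hv
  have huR : u ∈ R := by
    by_contra huR
    refine hR.2.1 (F.face_mem _ h.right_mem_cones _ fun v hv => Multiset.mem_toFinset.mpr ?_)
    exact Multiset.subset_of_le hβ (hRβ v hv (ne_of_mem_of_not_mem hv huR))
  refine ⟨R.erase u, Finset.nonempty_iff_ne_empty.mpr fun hW => hR.2.1 ?_,
    (Multiset.le_iff_subset (R.erase u).nodup).mpr fun v hv =>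
      hRβ v (Finset.mem_of_mem_erase hv) (Finset.ne_of_mem_erase hv), ?_⟩
  · rw [← Finset.insert_erase huR, hW, Finset.insert_empty]
    exact F.singleton_mem u hu
  · rw [Finset.add_sum_erase R (fun v => v) huR]
    exact hprim R hR

theorem false_of_sum_eq_add_ray
    (hprim : F.PrimitiveSumsZeroOrRay) (h : F.ConeRelation ℓ s t) (hM : ∀ r ∈ F.rays, ℓ r ≤ M)
    (ih : ∀ s' t', F.ConeRelation ℓ s' t' → M * t'.card - s'.card < M * t.card - s.card → s' = 0)
    (hs : s ≠ 0) {S : Multiset (Fin n → ℤ)} (hS : S ⊆ s) (hcard : s.card < S.card) :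
    ∀ β u, β ≤ t → β.card < t.card → u ∈ F.rays → S.sum = β.sum + u → False := by
  intro β
  induction β using Multiset.strongInductionOn with
  | _ β ihβ =>
  intro u hβ hβcard hu hsum
  by_cases huS : u ∈ S
  · refine h.false_of_sum_eq hM ih hs (fun v hv => hS (Multiset.mem_of_mem_erase hv)) hβ ?_ hβcard
      (add_left_cancel ((Multiset.sum_erase huS).trans (hsum.trans (add_comm _ _))))
    have := Multiset.card_erase_add_one huS
    omega
  by_cases hcone : (u ::ₘ β).toFinset ∈ F.cones
  · have h' := h.of_subset_cons hS (Multiset.subset_of_le hβ) huS hcone hsum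
    have hS0 := ih S _ h' (by
      have h1 := h.card_left_le hM
      have h2 := h'.card_left_le hM
      have h3 : M * (u ::ₘ β).card ≤ M * t.card :=
        Nat.mul_le_mul_left M (by rw [Multiset.card_cons]; omega)
      omega)
    simp [hS0] at hcard
  obtain ⟨W, hW, hWβ, hWsum⟩ := h.exists_primitive_insert hprim hβ hu hcone
  obtain ⟨β', rfl⟩ : ∃ β', β = β' + W.val := ⟨_, (tsub_add_cancel_of_le hWβ).symm⟩
  have hsumW : S.sum = β'.sum + (u + ∑ v ∈ W, v) := by
    rw [hsum, Multiset.sum_add, Finset.sum_val]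
    simp only [id]
    abel
  have hβ' : β' < β' + W.val :=
    lt_add_of_pos_right _ (pos_iff_ne_zero.mpr (Finset.val_eq_zero.not.mpr hW.ne_empty))
  have hβ'card : β'.card < t.card := (Multiset.card_lt_card hβ').trans hβcard
  rcases hWsum with hzero | hray
  · exact h.false_of_sum_eq hM ih hs hS ((Multiset.le_add_right _ _).trans hβ) hcard.le
      hβ'card (by rw [hsumW, hzero, add_zero])
  · exact ihβ β' hβ' _ ((Multiset.le_add_right _ _).trans hβ) hβ'card hray hsumW

theorem exists_primitive_split
    (hprim : F.PrimitiveSumsZeroOrRay)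
    (h : F.ConeRelation ℓ s t) (hs : s ≠ 0) :
    ∃ R₁ R₂ : Finset (Fin n → ℤ), R₁.Nonempty ∧ R₂.Nonempty ∧ R₁.val ≤ s ∧ R₂.val ≤ t ∧
      (∑ v ∈ R₁, v + ∑ v ∈ R₂, v = 0 ∨ ∑ v ∈ R₁, v + ∑ v ∈ R₂, v ∈ F.rays) := by
  have hst : (s + t).toFinset ∉ F.cones := fun hc =>
    hs (disjoint_self.mp (F.eq_of_sum_eq_of_add_mem_cones hc h.sum_eq ▸ h.disjoint))
  have hrays : (s + t).toFinset ⊆ F.rays := by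
    rw [Multiset.toFinset_add]
    exact Finset.union_subset (F.cone_rays _ h.left_mem_cones) (F.cone_rays _ h.right_mem_cones)
  obtain ⟨R, hRsub, hR⟩ := F.exists_isPrimitiveSet_subset hrays hst
  have hRt : ∀ v ∈ R, v ∉ s → v ∈ t := fun v hv hvs => by
    simpa [hvs] using hRsub hv
  refine ⟨R.filter (· ∈ s), R.filter (· ∉ s), ?_, ?_, ?_, ?_, ?_⟩
  · by_contra hR₁
    refine hR.2.1 (F.face_mem _ h.right_mem_cones _ fun v hv => Multiset.mem_toFinset.mpr ?_)
    exact hRt v hv fun hvs => hR₁ ⟨v, Finset.mem_filter.mpr ⟨hv, hvs⟩⟩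
  · by_contra hR₂
    refine hR.2.1 (F.face_mem _ h.left_mem_cones _ fun v hv => Multiset.mem_toFinset.mpr ?_)
    by_contra hvs
    exact hR₂ ⟨v, Finset.mem_filter.mpr ⟨hv, hvs⟩⟩
  · exact (Multiset.le_iff_subset (Finset.nodup _)).mpr fun v hv => (Finset.mem_filter.mp hv).2
  · exact (Multiset.le_iff_subset (Finset.nodup _)).mpr fun v hv =>
      hRt v (Finset.mem_filter.mp hv).1 (Finset.mem_filter.mp hv).2
  · rw [Finset.sum_filter_add_sum_filter_not]
    exact hprim R hR

theorem left_eq_zero (hprim : F.PrimitiveSumsZeroOrRay)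
    (hM : ∀ r ∈ F.rays, ℓ r ≤ M) (h : F.ConeRelation ℓ s t) : s = 0 := by
  induction hk : M * t.card - s.card using Nat.strong_induction_on generalizing s t with
  | _ k ihk =>
  by_contra hs
  have ih : ∀ s' t', F.ConeRelation ℓ s' t' → M * t'.card - s'.card < M * t.card - s.card →
      s' = 0 := fun s' t' h' hlt => ihk _ (hk ▸ hlt) h' rfl
  obtain ⟨R₁, R₂, hR₁, hR₂, hR₁s, hR₂t, hR⟩ := h.exists_primitive_split hprim hs
  obtain ⟨β, rfl⟩ : ∃ β, t = β + R₂.val := ⟨t - R₂.val, (tsub_add_cancel_of_le hR₂t).symm⟩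
  have hsum : (s + R₁.val).sum = β.sum + (∑ v ∈ R₁, v + ∑ v ∈ R₂, v) := by
    rw [Multiset.sum_add, h.sum_eq, Multiset.sum_add, Finset.sum_val, Finset.sum_val]
    simp only [id]
    abel
  have hS : s + R₁.val ⊆ s := fun v hv =>
    (Multiset.mem_add.mp hv).elim id fun hv => Multiset.subset_of_le hR₁s hv
  have hcard : s.card < (s + R₁.val).card := by
    rw [Multiset.card_add]
    exact Nat.lt_add_of_pos_right hR₁.card_pos
  have hβ : β.card < (β + R₂.val).card := by
    rw [Multiset.card_add]
    exact Nat.lt_add_of_pos_right hR₂.card_pos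
  rcases hR with hzero | hray
  · exact h.false_of_sum_eq hM ih hs hS (Multiset.le_add_right _ _) hcard.le hβ
      (by rw [hsum, hzero, add_zero])
  · exact h.false_of_sum_eq_add_ray hprim hM ih hs hS hcard β _ (Multiset.le_add_right _ _) hβ
      hray hsum

end ConeRelation

theorem eq_of_sum_eq
    (hprim : F.PrimitiveSumsZeroOrRay)
    {s t : Multiset (Fin n → ℤ)} (hs : s.toFinset ∈ F.cones) (ht : t.toFinset ∈ F.cones)
    (hsum : s.sum = t.sum) : s = t := by
  obtain ⟨b, hb⟩ := F.nonsingular _ hs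
  have hM : ∀ r ∈ F.rays, b.sumCoords r ≤ ((F.rays.sup fun r => (b.sumCoords r).toNat : ℕ) : ℤ) :=
    fun r hr => (Int.self_le_toNat _).trans
      (by exact_mod_cast Finset.le_sup (f := fun r => (b.sumCoords r).toNat) hr)
  have hsub : s - t ⊆ s := Multiset.subset_of_le tsub_le_self
  have hrel : F.ConeRelation b.sumCoords (s - t) (t - s) :=
    { left_mem_cones := F.face_mem _ hs _ (Multiset.toFinset_subset.mpr hsub)
      eval_left := fun v hv => by
        obtain ⟨i, rfl⟩ := hb (Multiset.mem_toFinset.mpr (hsub hv))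
        exact b.sumCoords_self_apply i
      right_mem_cones :=
        F.face_mem _ ht _ (Multiset.toFinset_subset.mpr (Multiset.subset_of_le tsub_le_self))
      disjoint := Multiset.disjoint_left.mpr fun hv hv' => by
        rw [Multiset.mem_sub] at hv hv'
        omega
      sum_eq := by
        have hs' := congrArg Multiset.sum (Multiset.sub_add_inter s t)
        have ht' := congrArg Multiset.sum (Multiset.sub_add_inter t s)
        rw [Multiset.sum_add] at hs' ht'
        rw [Multiset.inter_comm, ← hsum, ← hs'] at ht'
        exact (add_right_cancel ht').symm }
  have hst : s - t = 0 := hrel.left_eq_zero hprim hM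
  have hts : t - s = 0 :=
    F.eq_zero_of_sum_eq_zero hrel.right_mem_cones (by rw [← hrel.sum_eq, hst, Multiset.sum_zero])
  exact le_antisymm (tsub_eq_zero_iff_le.mp hst) (tsub_eq_zero_iff_le.mp hts)

end CompleteNonsingFan

theorem stmt_9_general (n : ℕ) (F : CompleteNonsingFan n)
    (hprim : ∀ P, IsPrimitiveSet F P → (∑ v ∈ P, v = 0 ∨ ∑ v ∈ P, v ∈ F.rays))
    (P Q : Finset (Fin n → ℤ))
    (hP : IsPrimitiveSet F P) (hQ : IsPrimitiveSet F Q) (hPQ : P ≠ Q)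
    (ρ' : Fin n → ℤ)
    (hsP : ∑ v ∈ P, v = ρ') (hsQ : ∑ v ∈ Q, v = ρ') :
    Disjoint P Q := by
  refine Finset.disjoint_left.mpr fun ρ hρP hρQ => hPQ ?_
  have hsum : (P.erase ρ).val.sum = (Q.erase ρ).val.sum := by
    rw [Finset.sum_val, Finset.sum_val]
    exact add_left_cancel ((Finset.add_sum_erase P id hρP).trans
      (hsP.trans (hsQ.symm.trans (Finset.add_sum_erase Q id hρQ).symm)))
  have herase := F.eq_of_sum_eq hprim
    (by rw [Finset.val_toFinset]; exact hP.2.2 ρ hρP)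
    (by rw [Finset.val_toFinset]; exact hQ.2.2 ρ hρQ) hsum
  rw [← Finset.insert_erase hρP, ← Finset.insert_erase hρQ, Finset.val_inj.mp herase]

/-- Lemma 3.7, case ρ' = ρ̂': in a complete nonsingular fan in which
every primitive relation has right-hand side 0 or a single ray generator, two
distinct primitive sets whose generator sums equal the same ray generator ρ'
are disjoint. -/
theorem stmt_9 (n : ℕ) (F : CompleteNonsingFan n)
    (hprim : ∀ P, IsPrimitiveSet F P → (∑ v ∈ P, v = 0 ∨ ∑ v ∈ P, v ∈ F.rays))
    (P Q : Finset (Fin n → ℤ))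
    (hP : IsPrimitiveSet F P) (hQ : IsPrimitiveSet F Q) (hPQ : P ≠ Q)
    (ρ' : Fin n → ℤ) (hρ' : ρ' ∈ F.rays)
    (hsP : ∑ v ∈ P, v = ρ') (hsQ : ∑ v ∈ Q, v = ρ') :
    Disjoint P Q :=
  stmt_9_general n F hprim P Q hP hQ hPQ ρ' hsP hsQ
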